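/- arXiv:1605.07174 — 5 statements merged into one kernel-verified Lean document; each statement's English description precedes it below -/
import Mathlib

section
/- Let K be an N×N real symmetric positive semidefinite matrix, P an S×N sampling matrix, y ∈ ℝ^S, μ > 0, let 𝓛 : ℝ^S → ℝ be an arbitrary loss function, and let Ω : ℝ → ℝ be nondecreasing on [0,∞). Define the objective J(ᾱ) := (1/S)·𝓛(y − P K ᾱ) + μ·Ω(√(ᾱᵀ K ᾱ)) for ᾱ ∈ ℝ^N. Then for every ᾱ ∈ ℝ^N there exists α ∈ ℝ^S such that P K (Pᵀ α) = P K ᾱ and J(Pᵀ α) ≤ J(ᾱ). Consequently, if J attains its infimum over ℝ^N, then it attains it at a vector of the form Pᵀ α with α ∈ ℝ^S; i.e., the kernel-based estimate can be expressed as f̂ = K Pᵀ α, a combination of only the kernel columns indexed by the sampled vertices (representer theorem for graph signals). -/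
/-!
Factor `K = Bᵀ B`, so that `ᾱᵀ K ᾱ = ‖B ᾱ‖²` and `P K ᾱ = (B Pᵀ)ᵀ (B ᾱ)`. The orthogonal
projection of `B ᾱ` onto the range of `B Pᵀ` is some `B Pᵀ α`; it satisfies the normal equations
`(B Pᵀ)ᵀ (B Pᵀ α) = (B Pᵀ)ᵀ (B ᾱ)`, i.e. `P K Pᵀ α = P K ᾱ`, and has norm at most `‖B ᾱ‖`.
Hence `Pᵀ α` leaves the data-fit term of `J` unchanged and, `Ω` being monotone, does not
increase the regularizer.
-/

open Matrix

theorem Matrix.exists_transpose_mulVec_mulVec_eq_and_dotProduct_self_le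
    {m s : Type*} [Fintype m] [Fintype s] (A : Matrix m s ℝ) (v : m → ℝ) :
    ∃ α : s → ℝ, Aᵀ *ᵥ (A *ᵥ α) = Aᵀ *ᵥ v ∧ (A *ᵥ α) ⬝ᵥ (A *ᵥ α) ≤ v ⬝ᵥ v := by
  classical
  let W := LinearMap.range (toLpLin 2 2 A)
  obtain ⟨α, hα⟩ := W.starProjection_apply_mem (WithLp.toLp 2 v)
  have hAα : A *ᵥ WithLp.ofLp α = WithLp.ofLp (W.starProjection (WithLp.toLp 2 v)) :=
    congrArg WithLp.ofLp hα
  refine ⟨WithLp.ofLp α, ?_, ?_⟩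
  · set u := Aᵀ *ᵥ (v - A *ᵥ WithLp.ofLp α)
    have hperp := W.inner_right_of_mem_orthogonal (LinearMap.mem_range_self _ (WithLp.toLp 2 u))
      (W.sub_starProjection_mem_orthogonal (WithLp.toLp 2 v))
    -- the residual `v - A α` is orthogonal to `A u`, and `(A u) ⬝ᵥ (v - A α) = u ⬝ᵥ u`
    have hu : u ⬝ᵥ u = 0 := by
      rw [← hα, EuclideanSpace.inner_eq_star_dotProduct] at hperp
      simpa [u, dotProduct_mulVec, vecMul_transpose, dotProduct_comm] using hperp
    rw [eq_comm, ← sub_eq_zero, ← mulVec_sub]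
    exact dotProduct_self_eq_zero.mp hu
  · have hnorm : ∀ x : m → ℝ, x ⬝ᵥ x = ‖WithLp.toLp 2 x‖ ^ 2 := fun x => by
      rw [← real_inner_self_eq_norm_sq, EuclideanSpace.inner_toLp_toLp, star_trivial]
    rw [hAα, hnorm, hnorm, WithLp.toLp_ofLp]
    gcongr
    exact W.norm_starProjection_apply_le _

theorem Matrix.PosSemidef.exists_eq_transpose_mul_self {n : Type*} [Fintype n]
    {K : Matrix n n ℝ} (hK : K.PosSemidef) : ∃ B : Matrix n n ℝ, K = Bᵀ * B := by
  classical
  open scoped MatrixOrder Matrix.Norms.L2Operator in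
  simpa [star_eq_conjTranspose] using CStarAlgebra.nonneg_iff_eq_star_mul_self.mp hK.nonneg

theorem Matrix.PosSemidef.exists_mulVec_mulVec_transpose_eq_and_dotProduct_le
    {n s : Type*} [Fintype n] [Fintype s] {K : Matrix n n ℝ} (hK : K.PosSemidef)
    (P : Matrix s n ℝ) (a : n → ℝ) :
    ∃ α : s → ℝ, P *ᵥ (K *ᵥ (Pᵀ *ᵥ α)) = P *ᵥ (K *ᵥ a) ∧
      (Pᵀ *ᵥ α) ⬝ᵥ (K *ᵥ (Pᵀ *ᵥ α)) ≤ a ⬝ᵥ (K *ᵥ a) := by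
  obtain ⟨B, rfl⟩ := hK.exists_eq_transpose_mul_self
  have hdata : ∀ x, P *ᵥ ((Bᵀ * B) *ᵥ x) = (B * Pᵀ)ᵀ *ᵥ (B *ᵥ x) := fun x => by
    simp only [transpose_mul, transpose_transpose, mulVec_mulVec, Matrix.mul_assoc]
  have hquad : ∀ x, x ⬝ᵥ ((Bᵀ * B) *ᵥ x) = (B *ᵥ x) ⬝ᵥ (B *ᵥ x) := fun x => by
    rw [← mulVec_mulVec, dotProduct_mulVec, vecMul_transpose]
  obtain ⟨α, hnormal, hle⟩ :=
    (B * Pᵀ).exists_transpose_mulVec_mulVec_eq_and_dotProduct_self_le (B *ᵥ a)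
  rw [← mulVec_mulVec] at hnormal hle
  exact ⟨α, by rwa [hdata, hdata], by rwa [hquad, hquad]⟩

theorem stmt_0_general (N S : ℕ) (K : Matrix (Fin N) (Fin N) ℝ) (hK : K.PosSemidef)
    (P : Matrix (Fin S) (Fin N) ℝ)
    (y : Fin S → ℝ) (μ : ℝ) (hμ : 0 < μ)
    (L : (Fin S → ℝ) → ℝ) (Om : ℝ → ℝ) (hOm : MonotoneOn Om (Set.Ici 0))
    (J : (Fin N → ℝ) → ℝ)
    (hJ : ∀ a : Fin N → ℝ, J a = (1 / (S : ℝ)) * L (y - P *ᵥ (K *ᵥ a))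
      + μ * Om (Real.sqrt (a ⬝ᵥ (K *ᵥ a)))) :
    (∀ abar : Fin N → ℝ, ∃ α : Fin S → ℝ,
        P *ᵥ (K *ᵥ (Pᵀ *ᵥ α)) = P *ᵥ (K *ᵥ abar) ∧ J (Pᵀ *ᵥ α) ≤ J abar) ∧
    ((∃ a0 : Fin N → ℝ, ∀ a : Fin N → ℝ, J a0 ≤ J a) →
      ∃ α : Fin S → ℝ, ∀ a : Fin N → ℝ, J (Pᵀ *ᵥ α) ≤ J a) := by
  have key : ∀ abar : Fin N → ℝ, ∃ α : Fin S → ℝ,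
      P *ᵥ (K *ᵥ (Pᵀ *ᵥ α)) = P *ᵥ (K *ᵥ abar) ∧ J (Pᵀ *ᵥ α) ≤ J abar := by
    intro abar
    obtain ⟨α, hdata, hquad⟩ := hK.exists_mulVec_mulVec_transpose_eq_and_dotProduct_le P abar
    refine ⟨α, hdata, ?_⟩
    rw [hJ, hJ, hdata]
    gcongr _ + μ * ?_
    exact hOm (Real.sqrt_nonneg _) (Real.sqrt_nonneg _) (Real.sqrt_le_sqrt hquad)
  refine ⟨key, fun ⟨a0, ha0⟩ => ?_⟩
  obtain ⟨α, -, hle⟩ := key a0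
  exact ⟨α, fun a => hle.trans (ha0 a)⟩

/-- Representer theorem for graph signals. -/
theorem stmt_0 (N S : ℕ) (K : Matrix (Fin N) (Fin N) ℝ) (hK : K.PosSemidef)
    (idx : Fin S → Fin N) (hidx : StrictMono idx)
    (P : Matrix (Fin S) (Fin N) ℝ)
    (hP : ∀ s n, P s n = if n = idx s then 1 else 0)
    (y : Fin S → ℝ) (μ : ℝ) (hμ : 0 < μ)
    (L : (Fin S → ℝ) → ℝ) (Om : ℝ → ℝ) (hOm : MonotoneOn Om (Set.Ici 0))
    (J : (Fin N → ℝ) → ℝ)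
    (hJ : ∀ a : Fin N → ℝ, J a = (1 / (S : ℝ)) * L (y - P *ᵥ (K *ᵥ a))
      + μ * Om (Real.sqrt (a ⬝ᵥ (K *ᵥ a)))) :
    (∀ abar : Fin N → ℝ, ∃ α : Fin S → ℝ,
        P *ᵥ (K *ᵥ (Pᵀ *ᵥ α)) = P *ᵥ (K *ᵥ abar) ∧ J (Pᵀ *ᵥ α) ≤ J abar) ∧
    ((∃ a0 : Fin N → ℝ, ∀ a : Fin N → ℝ, J a0 ≤ J a) →
      ∃ α : Fin S → ℝ, ∀ a : Fin N → ℝ, J (Pᵀ *ᵥ α) ≤ J a) :=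
  stmt_0_general N S K hK P y μ hμ L Om hOm J hJ
end

section
/- Let U be an N×N real orthogonal matrix, B ⊆ {1,…,N}, and let U_B be the N×|B| submatrix of U consisting of the columns indexed by B. For β > 0 let K_β := U D_β Uᵀ, where D_β is the diagonal matrix with (D_β)_{nn} = β if n ∈ B and (D_β)_{nn} = 1/β if n ∉ B. Let P be an S×N sampling matrix, y ∈ ℝ^S, and μ > 0, and assume that the |B|×|B| matrix U_Bᵀ Pᵀ P U_B is invertible. Then for every β > 0 the matrix P K_β Pᵀ + μS·I_S is invertible, and as β → ∞ the kernel ridge regression estimate K_β Pᵀ (P K_β Pᵀ + μS·I_S)^{-1} y converges to the least-squares bandlimited estimate U_B (U_Bᵀ Pᵀ P U_B)^{-1} U_Bᵀ Pᵀ y. -/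
/-!
Put `Q = U_B U_Bᵀ`, an idempotent since `U_Bᵀ U_B = 1`. Then `K_β = β Q + β⁻¹ (1 - Q)`, and the
push-through identity `K Pᵀ (P K Pᵀ + c)⁻¹ = (PᵀP + c K⁻¹)⁻¹ Pᵀ` (with `c = μS`) reduces the
claim to the behaviour of `M_t = PᵀP + c (t Q + t⁻¹ (1 - Q))` as `t = β⁻¹ → 0⁺`.
Factor `M_t = L_t (Q + t⁻¹ (1 - Q))` with `L_t = PᵀP (Q + t (1 - Q)) + c (t Q + 1 - Q)`:
`L_t` is polynomial in `t`, and `L_0 = PᵀP Q + c (1 - Q)` is invertible because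
`U_Bᵀ L_0 = (U_Bᵀ PᵀP U_B) U_Bᵀ`. Hence `M_t⁻¹ = (Q + t (1 - Q)) L_t⁻¹` tends to
`Q L_0⁻¹ = U_B (U_Bᵀ PᵀP U_B)⁻¹ U_Bᵀ`.
-/

open Matrix Filter Topology

section IdempotentCombination

variable {R A : Type*} [CommRing R] [Ring A] [Algebra R A]

def idemCombo (p : A) (a b : R) : A := a • p + b • (1 - p)

theorem idemCombo_one_one (p : A) : idemCombo p (1 : R) 1 = 1 := by
  simp [idemCombo]

theorem idemCombo_one_zero (p : A) : idemCombo p (1 : R) 0 = p := by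
  simp [idemCombo]

theorem IsIdempotentElem.idemCombo_mul {p : A} (hp : IsIdempotentElem p) (a b a' b' : R) :
    idemCombo p a b * idemCombo p a' b' = idemCombo p (a * a') (b * b') := by
  simp only [idemCombo, add_mul, mul_add, smul_mul_smul_comm, hp.eq, hp.mul_one_sub_self,
    hp.one_sub_mul_self, hp.one_sub.eq, smul_zero, add_zero, zero_add]

theorem mul_idemCombo_mul {u v : A} (huv : u * v = 1) (p : A) (a b : R) :
    u * idemCombo p a b * v = idemCombo (u * p * v) a b := by
  simp only [idemCombo, mul_add, add_mul, mul_smul_comm, smul_mul_assoc, mul_sub, sub_mul,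
    mul_one, huv]

theorem Continuous.idemCombo [TopologicalSpace R] [TopologicalSpace A] [ContinuousSMul R A]
    [ContinuousAdd A] {X : Type*} [TopologicalSpace X] (p : A) {a b : X → R}
    (ha : Continuous a) (hb : Continuous b) : Continuous fun x => idemCombo p (a x) (b x) :=
  (ha.smul continuous_const).add (hb.smul continuous_const)

theorem IsIdempotentElem.add_smul_idemCombo_eq_mul {K : Type*} [Field K] [Algebra K A] {p : A}
    (hp : IsIdempotentElem p) (G : A) (c : K) {t : K} (ht : t ≠ 0) :
    G + c • idemCombo p t t⁻¹
      = (G * idemCombo p 1 t + c • idemCombo p t 1) * idemCombo p 1 t⁻¹ := by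
  simp only [add_mul, mul_assoc, smul_mul_assoc, hp.idemCombo_mul, mul_one, one_mul,
    mul_inv_cancel₀ ht, idemCombo_one_one]

end IdempotentCombination

namespace Matrix

variable {n m : Type*} [Fintype n]

theorem isIdempotentElem_mul_transpose [Fintype m] [DecidableEq m] {R : Type*} [CommRing R] {V : Matrix n m R}
    (hV : Vᵀ * V = 1) : IsIdempotentElem (V * Vᵀ) := by
  rw [IsIdempotentElem, Matrix.mul_assoc, ← Matrix.mul_assoc Vᵀ, hV, Matrix.one_mul]

section ProjectedLimit

variable [DecidableEq n] [Fintype m] [DecidableEq m] {K : Type*} [Field K] {V : Matrix n m K}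

theorem transpose_mul_mul_add_smul_one_sub (hV : Vᵀ * V = 1) (G : Matrix n n K) (c : K) :
    Vᵀ * (G * (V * Vᵀ) + c • (1 - V * Vᵀ)) = Vᵀ * G * V * Vᵀ := by
  simp only [Matrix.mul_add, Matrix.mul_smul, Matrix.mul_sub, Matrix.mul_one,
    ← Matrix.mul_assoc, hV, Matrix.one_mul, sub_self, smul_zero, add_zero]

theorem isUnit_mul_add_smul_one_sub (hV : Vᵀ * V = 1) {G : Matrix n n K}
    (hG : IsUnit (Vᵀ * G * V)) {c : K} (hc : c ≠ 0) :
    IsUnit (G * (V * Vᵀ) + c • (1 - V * Vᵀ)) := by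
  set L := G * (V * Vᵀ) + c • (1 - V * Vᵀ)
  have hQ : V * Vᵀ = V * (Vᵀ * G * V)⁻¹ * (Vᵀ * L) := by
    rw [transpose_mul_mul_add_smul_one_sub hV, ← Matrix.mul_assoc, Matrix.mul_assoc V,
      nonsing_inv_mul _ ((isUnit_iff_isUnit_det _).mp hG), Matrix.mul_one]
  have hL : L - G * (V * Vᵀ) = c • (1 - V * Vᵀ) := add_sub_cancel_left _ _
  refine .of_mul_eq_one_right
    (c⁻¹ • (1 - G * V * (Vᵀ * G * V)⁻¹ * Vᵀ) + V * (Vᵀ * G * V)⁻¹ * Vᵀ) ?_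
  calc _ = c⁻¹ • (L - G * (V * (Vᵀ * G * V)⁻¹ * (Vᵀ * L))) + V * (Vᵀ * G * V)⁻¹ * (Vᵀ * L) := by
        simp only [Matrix.add_mul, Matrix.smul_mul, Matrix.sub_mul, Matrix.one_mul,
          Matrix.mul_assoc]
    _ = 1 := by rw [← hQ, hL, smul_smul, inv_mul_cancel₀ hc, one_smul, sub_add_cancel]

theorem mul_transpose_mul_inv_mul_add_smul_one_sub (hV : Vᵀ * V = 1) {G : Matrix n n K}
    (hG : IsUnit (Vᵀ * G * V)) {c : K} (hc : c ≠ 0) :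
    V * Vᵀ * (G * (V * Vᵀ) + c • (1 - V * Vᵀ))⁻¹ = V * (Vᵀ * G * V)⁻¹ * Vᵀ := by
  have hL := (isUnit_iff_isUnit_det _).mp (isUnit_mul_add_smul_one_sub hV hG hc)
  calc V * Vᵀ * (G * (V * Vᵀ) + c • (1 - V * Vᵀ))⁻¹
      = V * ((Vᵀ * G * V)⁻¹ * (Vᵀ * G * V * Vᵀ) * (G * (V * Vᵀ) + c • (1 - V * Vᵀ))⁻¹) := by
        rw [nonsing_inv_mul_cancel_left _ _ ((isUnit_iff_isUnit_det _).mp hG), Matrix.mul_assoc]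
    _ = V * (Vᵀ * G * V)⁻¹ * Vᵀ := by
        rw [← transpose_mul_mul_add_smul_one_sub hV G c]
        simp only [Matrix.mul_assoc, mul_nonsing_inv _ hL, Matrix.mul_one]

end ProjectedLimit

theorem tendsto_inv_add_smul_idemCombo [DecidableEq n] [Fintype m] [DecidableEq m] {V : Matrix n m ℝ}
    (hV : Vᵀ * V = 1) {G : Matrix n n ℝ} (hG : IsUnit (Vᵀ * G * V)) {c : ℝ} (hc : c ≠ 0) :
    (∀ᶠ t in 𝓝[≠] (0 : ℝ), IsUnit (G + c • idemCombo (V * Vᵀ) t t⁻¹)) ∧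
    Tendsto (fun t => (G + c • idemCombo (V * Vᵀ) t t⁻¹)⁻¹) (𝓝[≠] (0 : ℝ))
      (𝓝 (V * (Vᵀ * G * V)⁻¹ * Vᵀ)) := by
  set Q := V * Vᵀ
  have hQ : IsIdempotentElem Q := isIdempotentElem_mul_transpose hV
  set L : ℝ → Matrix n n ℝ := fun t => G * idemCombo Q 1 t + c • idemCombo Q t 1
  have hLcont : Continuous L :=
    (continuous_const.mul (continuous_const.idemCombo Q continuous_id)).add
      ((continuous_id.idemCombo Q continuous_const).const_smul c)
  have hL0 : L 0 = G * Q + c • (1 - Q) := by simp [L, idemCombo]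
  have hL0det : (L 0).det ≠ 0 := isUnit_iff_ne_zero.mp <| (isUnit_iff_isUnit_det _).mp <|
    hL0 ▸ isUnit_mul_add_smul_one_sub hV hG hc
  have hLunit : ∀ᶠ t in 𝓝 0, IsUnit (L t) := by
    simp only [isUnit_iff_isUnit_det _, isUnit_iff_ne_zero]
    exact (hLcont.matrix_det.tendsto 0).eventually_ne hL0det
  have hcont : ContinuousAt (fun t => idemCombo Q 1 t * (L t)⁻¹) 0 := by
    refine (continuous_const.idemCombo Q continuous_id).continuousAt.mul
      ((continuousAt_matrix_inv _ ?_).comp hLcont.continuousAt)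
    rw [Ring.inverse_eq_inv']
    exact continuousAt_inv₀ hL0det
  have hfactor : ∀ t ≠ (0 : ℝ), G + c • idemCombo Q t t⁻¹ = L t * idemCombo Q 1 t⁻¹ :=
    fun t ht => hQ.add_smul_idemCombo_eq_mul G c ht
  have hright : ∀ t ≠ (0 : ℝ), idemCombo Q 1 t⁻¹ * idemCombo Q 1 t = 1 := fun t ht => by
    rw [hQ.idemCombo_mul, one_mul, inv_mul_cancel₀ ht, idemCombo_one_one]
  constructor
  · filter_upwards [hLunit.filter_mono nhdsWithin_le_nhds, self_mem_nhdsWithin] with t hLt ht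
    rw [hfactor t ht]
    exact hLt.mul (.of_mul_eq_one _ (hright t ht))
  · have hlim := hcont.tendsto.mono_left (nhdsWithin_le_nhds (s := {0}ᶜ))
    rw [idemCombo_one_zero, hL0, mul_transpose_mul_inv_mul_add_smul_one_sub hV hG hc] at hlim
    refine hlim.congr' ?_
    filter_upwards [self_mem_nhdsWithin] with t ht
    rw [hfactor t ht, Matrix.mul_inv_rev, inv_eq_right_inv (hright t ht)]

theorem mul_mul_inv_add_smul_one_eq_inv_add_smul_mul [DecidableEq n] [Fintype m] [DecidableEq m]
    {R : Type*} [CommRing R] {K K' : Matrix n n R} (hK : K' * K = 1) (A : Matrix m n R)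
    (B : Matrix n m R) (c : R) (hA : IsUnit (A * K * B + c • 1))
    (hM : IsUnit (B * A + c • K')) :
    K * B * (A * K * B + c • 1)⁻¹ = (B * A + c • K')⁻¹ * B := by
  have push : (B * A + c • K') * (K * B) = B * (A * K * B + c • 1) := by
    simp only [Matrix.add_mul, Matrix.mul_add, Matrix.smul_mul, Matrix.mul_smul,
      Matrix.mul_assoc, Matrix.mul_one, ← Matrix.mul_assoc K' K, hK, Matrix.one_mul]
  rw [isUnit_iff_isUnit_det] at hA hM
  calc K * B * (A * K * B + c • 1)⁻¹
      = (B * A + c • K')⁻¹ * ((B * A + c • K') * (K * B)) * (A * K * B + c • 1)⁻¹ := by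
        rw [nonsing_inv_mul_cancel_left _ _ hM]
    _ = (B * A + c • K')⁻¹ * B := by
        rw [push, ← Matrix.mul_assoc, mul_nonsing_inv_cancel_right _ _ hA]

theorem PosSemidef.isUnit_mul_mul_transpose_add_smul_one [Fintype m] [DecidableEq m] {K : Matrix n n ℝ}
    (hK : K.PosSemidef) (P : Matrix m n ℝ) {c : ℝ} (hc : 0 < c) :
    IsUnit (P * K * Pᵀ + c • 1) := by
  rw [← conjTranspose_eq_transpose_of_trivial]
  exact (PosDef.posSemidef_add (hK.mul_mul_conjTranspose_same P) (PosDef.one.smul hc)).isUnit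

theorem posSemidef_mul_diagonal_mul_transpose [DecidableEq n] (U : Matrix n n ℝ) {d : n → ℝ}
    (hd : ∀ i, 0 ≤ d i) : (U * diagonal d * Uᵀ).PosSemidef := by
  rw [← conjTranspose_eq_transpose_of_trivial]
  exact (posSemidef_diagonal_iff.mpr hd).mul_mul_conjTranspose_same U

theorem transpose_mul_self_submatrix_id [DecidableEq n] [DecidableEq m] {R : Type*} [CommRing R]
    {U : Matrix n n R} (hU : Uᵀ * U = 1) {f : m → n} (hf : Function.Injective f) :
    (U.submatrix id f)ᵀ * U.submatrix id f = 1 := by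
  rw [transpose_submatrix, ← submatrix_mul _ _ _ _ _ Function.bijective_id, hU,
    submatrix_one _ hf]

theorem mul_diagonal_indicator_mul_transpose [DecidableEq n] {R : Type*} [CommRing R]
    (U : Matrix n n R) (B : Finset n) :
    U * diagonal (fun i => if i ∈ B then 1 else 0) * Uᵀ
      = U.submatrix id ((↑) : B → n) * (U.submatrix id ((↑) : B → n))ᵀ := by
  ext i j
  rw [mul_apply, mul_apply]
  simp only [mul_diagonal, transpose_apply, submatrix_apply, id, mul_ite, mul_one, mul_zero,
    ite_mul, zero_mul]
  rw [Finset.sum_coe_sort B (fun k => U i k * U j k), Finset.sum_ite_mem, Finset.univ_inter]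

theorem diagonal_ite_mem [DecidableEq n] {R : Type*} [CommRing R] (B : Finset n) (a b : R) :
    diagonal (fun i => if i ∈ B then a else b)
      = idemCombo (diagonal fun i => if i ∈ B then (1 : R) else 0) a b := by
  ext i j
  by_cases hij : i = j
  · subst hij
    by_cases hi : i ∈ B <;> simp [idemCombo, hi]
  · simp [idemCombo, hij]

end Matrix

theorem stmt_1_general (N S : ℕ) (U : Matrix (Fin N) (Fin N) ℝ) (hU : Uᵀ * U = 1)
    (B : Finset (Fin N))
    (UB : Matrix (Fin N) B ℝ)
    (hUB : UB = U.submatrix id (fun b : B => (b : Fin N)))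
    (P : Matrix (Fin S) (Fin N) ℝ)
    (y : Fin S → ℝ) (μ : ℝ) (hμ : 0 < μ)
    (Kb : ℝ → Matrix (Fin N) (Fin N) ℝ)
    (hKb : ∀ β : ℝ, Kb β = U * Matrix.diagonal (fun n => if n ∈ B then β else β⁻¹) * Uᵀ)
    (hInv : IsUnit (UBᵀ * Pᵀ * P * UB)) :
    (∀ β : ℝ, 0 < β →
      IsUnit (P * Kb β * Pᵀ + (μ * S) • (1 : Matrix (Fin S) (Fin S) ℝ))) ∧
    Tendsto (fun β : ℝ => (Kb β * Pᵀ * (P * Kb β * Pᵀ + (μ * S) • 1)⁻¹) *ᵥ y)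
      atTop (nhds ((UB * (UBᵀ * Pᵀ * P * UB)⁻¹ * UBᵀ * Pᵀ) *ᵥ y)) := by
  obtain rfl | hS := Nat.eq_zero_or_pos S
  · exact ⟨fun _ _ => isUnit_of_subsingleton _, by simp [Subsingleton.elim y 0]⟩
  set c := μ * S
  have hc : 0 < c := by positivity
  have hV : UBᵀ * UB = 1 := hUB ▸ transpose_mul_self_submatrix_id hU Subtype.val_injective
  have hK : ∀ β, Kb β = idemCombo (UB * UBᵀ) β β⁻¹ := fun β => by
    rw [hKb, diagonal_ite_mem, mul_idemCombo_mul (mul_eq_one_comm.mp hU),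
      mul_diagonal_indicator_mul_transpose, hUB]
  have hridge : ∀ β : ℝ, 0 < β → IsUnit (P * Kb β * Pᵀ + c • 1) := fun β hβ =>
    PosSemidef.isUnit_mul_mul_transpose_add_smul_one
      (hKb β ▸ posSemidef_mul_diagonal_mul_transpose U fun i => by split_ifs <;> positivity) P hc
  refine ⟨hridge, ?_⟩
  rw [Matrix.mul_assoc UBᵀ Pᵀ] at hInv ⊢
  obtain ⟨hunit, hlim⟩ := tendsto_inv_add_smul_idemCombo hV hInv hc.ne'
  have hβ : Tendsto (fun β : ℝ => β⁻¹) atTop (𝓝[≠] 0) :=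
    tendsto_inv_atTop_nhdsGT_zero.mono_right (nhdsWithin_mono _ fun _ h => ne_of_gt h)
  have hest : ∀ᶠ β in atTop, Kb β * Pᵀ * (P * Kb β * Pᵀ + c • 1)⁻¹
      = (Pᵀ * P + c • idemCombo (UB * UBᵀ) β⁻¹ β⁻¹⁻¹)⁻¹ * Pᵀ := by
    filter_upwards [hβ.eventually hunit, eventually_gt_atTop 0] with β hM hβ
    refine mul_mul_inv_add_smul_one_eq_inv_add_smul_mul ?_ P Pᵀ c (hridge β hβ) hM
    rw [hK, (isIdempotentElem_mul_transpose hV).idemCombo_mul, inv_inv, inv_mul_cancel₀ hβ.ne',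
      mul_inv_cancel₀ hβ.ne', idemCombo_one_one]
  refine Tendsto.congr' ?_ <|
    ((continuous_id.matrix_mul continuous_const).matrix_mulVec continuous_const).tendsto _
      |>.comp (hlim.comp hβ)
  filter_upwards [hest] with β h
  simp only [Function.comp_apply, id, h]

/-- Kernel ridge regression with a bandlimited kernel converges to the
least-squares bandlimited estimate as β → ∞. -/
theorem stmt_1 (N S : ℕ) (U : Matrix (Fin N) (Fin N) ℝ) (hU : Uᵀ * U = 1)
    (B : Finset (Fin N))
    (UB : Matrix (Fin N) B ℝ)
    (hUB : UB = U.submatrix id (fun b : B => (b : Fin N)))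
    (idx : Fin S → Fin N) (hidx : StrictMono idx)
    (P : Matrix (Fin S) (Fin N) ℝ)
    (hP : ∀ s n, P s n = if n = idx s then 1 else 0)
    (y : Fin S → ℝ) (μ : ℝ) (hμ : 0 < μ)
    (Kb : ℝ → Matrix (Fin N) (Fin N) ℝ)
    (hKb : ∀ β : ℝ, Kb β = U * Matrix.diagonal (fun n => if n ∈ B then β else β⁻¹) * Uᵀ)
    (hInv : IsUnit (UBᵀ * Pᵀ * P * UB)) :
    (∀ β : ℝ, 0 < β →
      IsUnit (P * Kb β * Pᵀ + (μ * S) • (1 : Matrix (Fin S) (Fin S) ℝ))) ∧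
    Tendsto (fun β : ℝ => (Kb β * Pᵀ * (P * Kb β * Pᵀ + (μ * S) • 1)⁻¹) *ᵥ y)
      atTop (nhds ((UB * (UBᵀ * Pᵀ * P * UB)⁻¹ * UBᵀ * Pᵀ) *ᵥ y)) :=
  stmt_1_general N S U hU B UB hUB P y μ hμ Kb hKb hInv
end

section
/- Let (Ω, ℙ) be a probability space, and let x : Ω → ℝ^N and ε : Ω → ℝ^S be random vectors whose components are square-integrable, satisfying E[x xᵀ] = C, E[ε εᵀ] = σ²·I_S with σ² > 0, and E[x εᵀ] = 0. Let P be an S×N sampling matrix and y := P x + ε. For any N×N real symmetric positive semidefinite matrix K and any μ > 0, let f̂(K, μ) := K Pᵀ (P K Pᵀ + μS·I_S)^{-1} y denote the kernel ridge regression estimate, and let MSE(K, μ) := E‖x − f̂(K, μ)‖². Then MSE(C, σ²/S) ≤ MSE(K, μ) for every N×N real symmetric positive semidefinite matrix K and every μ > 0; i.e., the covariance kernel K = C with μ = σ²/S minimizes the mean-square error among all kernel ridge regression estimators. -/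
/-!
The estimate is linear in the observation `z = P x + ε`: it is `A z` with
`A = K Pᵀ (P K Pᵀ + μ S I)⁻¹`. If `A₀ E[z zᵀ] = E[x zᵀ]`, the error `x - A₀ z` is
uncorrelated with `z`, hence with `(A₀ - A) z`, and so
`E‖x - A z‖² = E‖x - A₀ z‖² + E‖(A₀ - A) z‖² ≥ E‖x - A₀ z‖²` for every `A`.
Here `E[x zᵀ] = C Pᵀ` and `E[z zᵀ] = P C Pᵀ + σ² I`, which is positive definite, and the
kernel ridge matrix for `K = C`, `μ = σ²/S` is exactly `A₀ = C Pᵀ (P C Pᵀ + σ² I)⁻¹`.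
-/

open Matrix MeasureTheory

section SecondMoment

variable {Ω ι κ τ : Type*} {m : MeasurableSpace Ω} {μ : Measure Ω}
  {u : Ω → ι → ℝ} {v : Ω → ι → ℝ} {w : Ω → κ → ℝ}

noncomputable def secondMoment (μ : Measure Ω) (u : Ω → ι → ℝ) (v : Ω → κ → ℝ) : Matrix ι κ ℝ :=
  of fun i j => ∫ ω, u ω i * v ω j ∂μ

lemma secondMoment_transpose (u : Ω → ι → ℝ) (w : Ω → κ → ℝ) :
    (secondMoment μ u w)ᵀ = secondMoment μ w u := by
  ext j i
  simp only [secondMoment, transpose_apply, of_apply, mul_comm]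

lemma secondMoment_add_left (hu : ∀ i, MemLp (fun ω => u ω i) 2 μ)
    (hv : ∀ i, MemLp (fun ω => v ω i) 2 μ) (hw : ∀ k, MemLp (fun ω => w ω k) 2 μ) :
    secondMoment μ (fun ω => u ω + v ω) w = secondMoment μ u w + secondMoment μ v w := by
  ext i k
  simp only [secondMoment, of_apply, Matrix.add_apply, Pi.add_apply, add_mul]
  exact integral_add ((hu i).integrable_mul (hw k)) ((hv i).integrable_mul (hw k))

lemma secondMoment_sub_left (hu : ∀ i, MemLp (fun ω => u ω i) 2 μ)
    (hv : ∀ i, MemLp (fun ω => v ω i) 2 μ) (hw : ∀ k, MemLp (fun ω => w ω k) 2 μ) :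
    secondMoment μ (fun ω => u ω - v ω) w = secondMoment μ u w - secondMoment μ v w := by
  ext i k
  simp only [secondMoment, of_apply, Matrix.sub_apply, Pi.sub_apply, sub_mul]
  exact integral_sub ((hu i).integrable_mul (hw k)) ((hv i).integrable_mul (hw k))

lemma secondMoment_add_right (hw : ∀ k, MemLp (fun ω => w ω k) 2 μ)
    (hu : ∀ i, MemLp (fun ω => u ω i) 2 μ) (hv : ∀ i, MemLp (fun ω => v ω i) 2 μ) :
    secondMoment μ w (fun ω => u ω + v ω) = secondMoment μ w u + secondMoment μ w v := by
  rw [← transpose_transpose (secondMoment μ w _), secondMoment_transpose,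
    secondMoment_add_left hu hv hw, transpose_add, secondMoment_transpose, secondMoment_transpose]

variable [Fintype ι]

lemma memLp_mulVec (A : Matrix κ ι ℝ) (hu : ∀ i, MemLp (fun ω => u ω i) 2 μ) (k : κ) :
    MemLp (fun ω => (A *ᵥ u ω) k) 2 μ :=
  memLp_finsetSum _ fun i _ => (hu i).const_mul (A k i)

lemma secondMoment_mulVec_left (A : Matrix τ ι ℝ) (hu : ∀ i, MemLp (fun ω => u ω i) 2 μ)
    (hw : ∀ k, MemLp (fun ω => w ω k) 2 μ) :
    secondMoment μ (fun ω => A *ᵥ u ω) w = A * secondMoment μ u w := by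
  ext t k
  simp only [secondMoment, of_apply, mul_apply, mulVec, dotProduct, Finset.sum_mul, mul_assoc]
  refine (integral_finsetSum _ fun i _ => ?_).trans ?_
  · exact ((hu i).integrable_mul (hw k)).const_mul (A t i)
  · simp only [integral_const_mul]

lemma secondMoment_mulVec_right (B : Matrix τ ι ℝ) (hw : ∀ k, MemLp (fun ω => w ω k) 2 μ)
    (hu : ∀ i, MemLp (fun ω => u ω i) 2 μ) :
    secondMoment μ w (fun ω => B *ᵥ u ω) = secondMoment μ w u * Bᵀ := by
  rw [← transpose_transpose (secondMoment μ w _), secondMoment_transpose,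
    secondMoment_mulVec_left B hu hw, transpose_mul, secondMoment_transpose]

lemma integrable_dotProduct (hu : ∀ i, MemLp (fun ω => u ω i) 2 μ)
    (hv : ∀ i, MemLp (fun ω => v ω i) 2 μ) : Integrable (fun ω => u ω ⬝ᵥ v ω) μ :=
  integrable_finsetSum _ fun i _ => (hu i).integrable_mul (hv i)

lemma integral_dotProduct (hu : ∀ i, MemLp (fun ω => u ω i) 2 μ)
    (hv : ∀ i, MemLp (fun ω => v ω i) 2 μ) :
    ∫ ω, u ω ⬝ᵥ v ω ∂μ = trace (secondMoment μ u v) :=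
  integral_finsetSum _ fun i _ => (hu i).integrable_mul (hv i)

lemma posSemidef_secondMoment_self (hu : ∀ i, MemLp (fun ω => u ω i) 2 μ) :
    (secondMoment μ u u).PosSemidef := by
  refine PosSemidef.of_dotProduct_mulVec_nonneg ?_ fun a => ?_
  · rw [IsHermitian, conjTranspose_eq_transpose_of_trivial, secondMoment_transpose]
  · -- `aᵀ E[u uᵀ] a = E[(aᵀ u)²]`, read off the `1 × 1` matrix `E[(R u)(R u)ᵀ]` with `R = aᵀ`
    let R := replicateRow Unit a
    have key : star a ⬝ᵥ (secondMoment μ u u *ᵥ a) =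
        secondMoment μ (fun ω => R *ᵥ u ω) (fun ω => R *ᵥ u ω) () () := by
      rw [secondMoment_mulVec_left R hu (memLp_mulVec R hu), secondMoment_mulVec_right R hu hu]
      simp [R, mul_apply, dotProduct, mulVec, Finset.mul_sum]
    rw [key]
    exact integral_nonneg fun ω => mul_self_nonneg _

theorem integral_sum_sq_sub_mulVec_le [Fintype κ] {x : Ω → ι → ℝ} {z : Ω → κ → ℝ}
    (hx : ∀ i, MemLp (fun ω => x ω i) 2 μ) (hz : ∀ k, MemLp (fun ω => z ω k) 2 μ)
    {A₀ : Matrix ι κ ℝ} (hA₀ : A₀ * secondMoment μ z z = secondMoment μ x z) (A : Matrix ι κ ℝ) :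
    ∫ ω, ∑ i, (x ω i - (A₀ *ᵥ z ω) i) ^ 2 ∂μ ≤ ∫ ω, ∑ i, (x ω i - (A *ᵥ z ω) i) ^ 2 ∂μ := by
  set e : Ω → ι → ℝ := fun ω => x ω - A₀ *ᵥ z ω
  set d : Ω → ι → ℝ := fun ω => (A₀ - A) *ᵥ z ω
  have he : ∀ i, MemLp (fun ω => e ω i) 2 μ := fun i => (hx i).sub (memLp_mulVec A₀ hz i)
  have hd : ∀ i, MemLp (fun ω => d ω i) 2 μ := memLp_mulVec (A₀ - A) hz
  have horth : ∫ ω, e ω ⬝ᵥ d ω ∂μ = 0 := by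
    rw [integral_dotProduct he hd, secondMoment_mulVec_right _ he hz,
      secondMoment_sub_left hx (memLp_mulVec A₀ hz) hz, secondMoment_mulVec_left _ hz hz, hA₀,
      sub_self, Matrix.zero_mul, trace_zero]
  have hsplit : ∀ ω, ∑ i, (x ω i - (A *ᵥ z ω) i) ^ 2
      = e ω ⬝ᵥ e ω + 2 * (e ω ⬝ᵥ d ω) + d ω ⬝ᵥ d ω := by
    intro ω
    simp only [dotProduct, Finset.mul_sum, ← Finset.sum_add_distrib]
    refine Finset.sum_congr rfl fun i _ => ?_
    simp only [e, d, sub_mulVec, Pi.sub_apply]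
    ring
  have hsq : ∀ ω, ∑ i, (x ω i - (A₀ *ᵥ z ω) i) ^ 2 = e ω ⬝ᵥ e ω := fun ω => by
    simp only [dotProduct, e, Pi.sub_apply, sq]
  simp only [hsplit, hsq]
  rw [integral_add (f := fun ω => e ω ⬝ᵥ e ω + 2 * (e ω ⬝ᵥ d ω))
      ((integrable_dotProduct he he).add ((integrable_dotProduct he hd).const_mul 2))
      (integrable_dotProduct hd hd),
    integral_add (integrable_dotProduct he he) ((integrable_dotProduct he hd).const_mul 2),
    integral_const_mul, horth, mul_zero, add_zero, le_add_iff_nonneg_right]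
  exact integral_nonneg fun ω => dotProduct_self_star_nonneg (d ω)

end SecondMoment

theorem stmt_2_general (N S : ℕ) (hS : 0 < S)
    (Ω : Type*) [MeasureSpace Ω]
    (x : Ω → Fin N → ℝ) (ε : Ω → Fin S → ℝ)
    (hx : ∀ i, MemLp (fun ω => x ω i) 2 volume)
    (hε : ∀ s, MemLp (fun ω => ε ω s) 2 volume)
    (C : Matrix (Fin N) (Fin N) ℝ) (σ2 : ℝ) (hσ2 : 0 < σ2)
    (hC : ∀ i j, ∫ ω, x ω i * x ω j = C i j)
    (hεε : ∀ s t, ∫ ω, ε ω s * ε ω t = if s = t then σ2 else 0)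
    (hxε : ∀ i s, ∫ ω, x ω i * ε ω s = 0)
    (P : Matrix (Fin S) (Fin N) ℝ)
    (MSE : Matrix (Fin N) (Fin N) ℝ → ℝ → ℝ)
    (hMSE : ∀ (K : Matrix (Fin N) (Fin N) ℝ) (μ : ℝ), MSE K μ =
      ∫ ω, ∑ i, (x ω i -
        ((K * Pᵀ * (P * K * Pᵀ + (μ * S) • 1)⁻¹) *ᵥ (P *ᵥ x ω + ε ω)) i) ^ 2) :
    ∀ K : Matrix (Fin N) (Fin N) ℝ, K.PosSemidef → ∀ μ : ℝ, 0 < μ →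
      MSE C (σ2 / S) ≤ MSE K μ := by
  intro K _ μ _
  set z : Ω → Fin S → ℝ := fun ω => P *ᵥ x ω + ε ω
  have hPx := memLp_mulVec P hx
  have hz : ∀ s, MemLp (fun ω => z ω s) 2 volume := fun s => (hPx s).add (hε s)
  have hMxx : secondMoment volume x x = C := ext hC
  have hMxε : secondMoment volume x ε = 0 := ext hxε
  have hMεε : secondMoment volume ε ε = σ2 • 1 := by
    ext s t
    simp [secondMoment, hεε, one_apply]
  have hMxz : secondMoment volume x z = C * Pᵀ := by
    rw [secondMoment_add_right hx hPx hε, secondMoment_mulVec_right P hx hx, hMxx, hMxε, add_zero]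
  have hMzz : secondMoment volume z z = P * C * Pᵀ + σ2 • 1 := by
    rw [secondMoment_add_left hPx hε hz, secondMoment_add_right hPx hPx hε,
      secondMoment_add_right hε hPx hε, secondMoment_mulVec_left P hx hPx,
      secondMoment_mulVec_right P hx hx, secondMoment_mulVec_right P hε hx,
      secondMoment_mulVec_left P hx hε, ← secondMoment_transpose x ε, hMxx, hMxε, hMεε]
    simp [Matrix.mul_assoc]
  have hM : (P * C * Pᵀ + σ2 • 1).PosDef := by
    have hPCP := (hMxx ▸ posSemidef_secondMoment_self hx).mul_mul_conjTranspose_same P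
    rw [conjTranspose_eq_transpose_of_trivial] at hPCP
    exact PosDef.posSemidef_add hPCP (PosDef.one.smul hσ2)
  have hσS : σ2 / S * S = σ2 := div_mul_cancel₀ _ (by positivity)
  rw [hMSE, hMSE, hσS]
  refine integral_sum_sq_sub_mulVec_le hx hz ?_ _
  rw [hMzz, hMxz, Matrix.mul_assoc, nonsing_inv_mul _ hM.det_pos.ne'.isUnit, Matrix.mul_one]

/-- The covariance kernel with μ = σ²/S minimizes the MSE among kernel ridge
regression estimators. -/
theorem stmt_2 (N S : ℕ) (hS : 0 < S)
    (Ω : Type*) [MeasureSpace Ω] [IsProbabilityMeasure (volume : Measure Ω)]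
    (x : Ω → Fin N → ℝ) (ε : Ω → Fin S → ℝ)
    (hx : ∀ i, MemLp (fun ω => x ω i) 2 volume)
    (hε : ∀ s, MemLp (fun ω => ε ω s) 2 volume)
    (C : Matrix (Fin N) (Fin N) ℝ) (σ2 : ℝ) (hσ2 : 0 < σ2)
    (hC : ∀ i j, ∫ ω, x ω i * x ω j = C i j)
    (hεε : ∀ s t, ∫ ω, ε ω s * ε ω t = if s = t then σ2 else 0)
    (hxε : ∀ i s, ∫ ω, x ω i * ε ω s = 0)
    (idx : Fin S → Fin N) (hidx : StrictMono idx)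
    (P : Matrix (Fin S) (Fin N) ℝ)
    (hP : ∀ s n, P s n = if n = idx s then 1 else 0)
    (MSE : Matrix (Fin N) (Fin N) ℝ → ℝ → ℝ)
    (hMSE : ∀ (K : Matrix (Fin N) (Fin N) ℝ) (μ : ℝ), MSE K μ =
      ∫ ω, ∑ i, (x ω i -
        ((K * Pᵀ * (P * K * Pᵀ + (μ * S) • 1)⁻¹) *ᵥ (P *ᵥ x ω + ε ω)) i) ^ 2) :
    ∀ K : Matrix (Fin N) (Fin N) ℝ, K.PosSemidef → ∀ μ : ℝ, 0 < μ →
      MSE C (σ2 / S) ≤ MSE K μ :=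
  stmt_2_general N S hS Ω x ε hx hε C σ2 hσ2 hC hεε hxε P MSE hMSE
end

section
/- Let C be an N×N real symmetric positive definite matrix, Q := C^{-1}, σ² > 0, P an S×N sampling matrix with sampled index set 𝒮 = {n_1 < … < n_S}, y ∈ ℝ^S, and f̂ := C Pᵀ (P C Pᵀ + σ²·I_S)^{-1} y. Then for every n ∈ {1,…,N}: (i) if n ∉ 𝒮, then f̂_n = −(1/Q_{nn}) Σ_{m ≠ n} Q_{nm} f̂_m, i.e., f̂_n equals the local linear minimum mean-square error prediction of the signal value at vertex n from the estimated values at the other vertices; and (ii) if n = n_s ∈ 𝒮, then f̂_n = y_s − σ² (Q f̂)_n = y_s − σ² Q_{nn} (f̂_n − (−(1/Q_{nn}) Σ_{m ≠ n} Q_{nm} f̂_m)), i.e., the observation y_s minus an estimate of the observation noise. (Here Q_{nn} > 0 since C is positive definite.) -/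
open Matrix

lemma posdef_diag_pos {N : ℕ} {A : Matrix (Fin N) (Fin N) ℝ} (hA : A.PosDef) (n : Fin N) :
    0 < A n n := by
  have h := hA.dotProduct_mulVec_pos (x := Pi.single n 1) (fun h => by simpa using congrFun h n)
  simpa [dotProduct, Pi.single_apply, mulVec, Finset.sum_ite_eq, Finset.sum_ite_eq'] using h

/-- Local LMMSE characterization of kernel ridge regression with the
covariance kernel on a Markov random field. -/
theorem stmt_3 (N S : ℕ) (C : Matrix (Fin N) (Fin N) ℝ) (hC : C.PosDef)
    (Q : Matrix (Fin N) (Fin N) ℝ) (hQ : Q = C⁻¹)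
    (σ2 : ℝ) (hσ2 : 0 < σ2)
    (idx : Fin S → Fin N) (hidx : StrictMono idx)
    (P : Matrix (Fin S) (Fin N) ℝ)
    (hP : ∀ s n, P s n = if n = idx s then 1 else 0)
    (y : Fin S → ℝ) (fhat : Fin N → ℝ)
    (hfhat : fhat = (C * Pᵀ * (P * C * Pᵀ + σ2 • 1)⁻¹) *ᵥ y) :
    (∀ n : Fin N, 0 < Q n n) ∧
    (∀ n : Fin N, n ∉ Set.range idx →
      fhat n = -(1 / Q n n) * ∑ m ∈ Finset.univ.erase n, Q n m * fhat m) ∧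
    (∀ s : Fin S,
      fhat (idx s) = y s - σ2 * Q (idx s) (idx s) *
        (fhat (idx s) - (-(1 / Q (idx s) (idx s)) *
          ∑ m ∈ Finset.univ.erase (idx s), Q (idx s) m * fhat m))) := by
  have hQpd : Q.PosDef := hQ ▸ hC.inv
  have hQpos : ∀ n, 0 < Q n n := fun n => posdef_diag_pos hQpd n
  -- M is positive definite, hence invertible
  set M : Matrix (Fin S) (Fin S) ℝ := P * C * Pᵀ + σ2 • 1 with hMdef
  have hMpd : M.PosDef := by
    have h1 : (P * C * Pᵀ).PosSemidef := by
      have := hC.posSemidef.mul_mul_conjTranspose_same P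
      simpa [Matrix.conjTranspose_eq_transpose_of_trivial] using this
    have h2 : (σ2 • (1 : Matrix (Fin S) (Fin S) ℝ)).PosDef := by
      rw [Matrix.smul_one_eq_diagonal]
      exact Matrix.PosDef.diagonal (fun _ => hσ2)
    exact Matrix.PosDef.posSemidef_add h1 h2
  set z : Fin S → ℝ := M⁻¹ *ᵥ y with hzdef
  have hfz : fhat = (C * Pᵀ) *ᵥ z := by
    rw [hfhat, hzdef, Matrix.mulVec_mulVec, Matrix.mul_assoc]
  have hMz : M *ᵥ z = y := by
    rw [hzdef, Matrix.mulVec_mulVec, Matrix.mul_nonsing_inv _ hMpd.det_pos.ne'.isUnit, Matrix.one_mulVec]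
  -- Key: Q *ᵥ fhat = Pᵀ *ᵥ z
  have hQf : Q *ᵥ fhat = Pᵀ *ᵥ z := by
    rw [hfz, Matrix.mulVec_mulVec, hQ, ← Matrix.mul_assoc,
      Matrix.nonsing_inv_mul _ hC.det_pos.ne'.isUnit, Matrix.one_mul]
  have hPTz : ∀ n, (Pᵀ *ᵥ z) n = ∑ s, (if n = idx s then z s else 0) := by
    intro n
    simp [Matrix.mulVec, dotProduct, Matrix.transpose_apply, hP, ite_mul]
  -- decomposition of (Q *ᵥ fhat) n
  have hdec : ∀ n, (Q *ᵥ fhat) n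
      = Q n n * fhat n + ∑ m ∈ Finset.univ.erase n, Q n m * fhat m := by
    intro n
    rw [Matrix.mulVec, dotProduct]
    exact (Finset.add_sum_erase _ _ (Finset.mem_univ n)).symm
  refine ⟨hQpos, ?_, ?_⟩
  · intro n hn
    have h0 : (Q *ᵥ fhat) n = 0 := by
      rw [hQf, hPTz]
      apply Finset.sum_eq_zero
      intro s _
      simp only [ite_eq_right_iff]
      intro h
      exact absurd ⟨s, h.symm⟩ hn
    have hd := hdec n
    rw [h0] at hd
    have hQn := (hQpos n).ne'
    have hT : ∑ m ∈ Finset.univ.erase n, Q n m * fhat m = -(Q n n * fhat n) := by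
      linarith [hd]
    rw [hT]
    field_simp
  · intro s
    have hzs : (Q *ᵥ fhat) (idx s) = z s := by
      rw [hQf, hPTz]
      rw [Finset.sum_eq_single s]
      · simp
      · intro b _ hb
        simp [hidx.injective.ne (Ne.symm hb)]
      · simp
    have hys : y s = fhat (idx s) + σ2 * z s := by
      have := congrFun hMz s
      rw [hMdef] at this
      rw [Matrix.add_mulVec, Matrix.smul_mulVec, Matrix.one_mulVec] at this
      have hPf : ((P * C * Pᵀ) *ᵥ z) s = fhat (idx s) := by
        have : (P *ᵥ fhat) s = fhat (idx s) := by
          simp [Matrix.mulVec, dotProduct, hP, ite_mul, Finset.sum_ite_eq, Finset.sum_ite_eq']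
        have hfz2 : P *ᵥ fhat = (P * (C * Pᵀ)) *ᵥ z := by rw [hfz, Matrix.mulVec_mulVec]
        rw [← Matrix.mul_assoc] at hfz2
        rw [← this, hfz2]
      simp only [Pi.add_apply, Pi.smul_apply, smul_eq_mul, hPf] at this
      linarith [this]
    have hQn := (hQpos (idx s)).ne'
    have hd := hdec (idx s)
    rw [hzs] at hd
    have hT : ∑ m ∈ Finset.univ.erase (idx s), Q (idx s) m * fhat m
        = z s - Q (idx s) (idx s) * fhat (idx s) := by linarith [hd]
    have h2 : Q (idx s) (idx s) * (fhat (idx s) - (-(1 / Q (idx s) (idx s)) *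
        (z s - Q (idx s) (idx s) * fhat (idx s)))) = z s := by
      field_simp
      ring
    rw [hT, hys, mul_assoc, h2]
    ring
end

section
/- Let K_1, …, K_M be N×N real symmetric positive semidefinite matrices, P an S×N sampling matrix, y ∈ ℝ^S, and μ > 0. Define J(ᾱ_1, …, ᾱ_M) := (1/S)‖y − Σ_{m=1}^M P K_m ᾱ_m‖² + μ Σ_{m=1}^M √(ᾱ_mᵀ K_m ᾱ_m) for ᾱ_1, …, ᾱ_M ∈ ℝ^N. Then for every tuple (ᾱ_1, …, ᾱ_M) ∈ (ℝ^N)^M there exist α_1, …, α_M ∈ ℝ^S such that J(Pᵀ α_1, …, Pᵀ α_M) ≤ J(ᾱ_1, …, ᾱ_M). Consequently, if J attains its infimum, it attains it at a tuple of the form (Pᵀ α_1, …, Pᵀ α_M), i.e., each component signal can be expanded as f̂_m = K_m Pᵀ α_m over only the sampled vertices. -/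
/-! Write `K = Bᵀ B`. Since `P K Pᵀ = (P Bᵀ)(P Bᵀ)ᵀ` has the same range as `P Bᵀ`, some `α`
solves `P K Pᵀ α = P K ā`, so `v = Pᵀ α` reproduces the sampled values of `K ā`. Then
`vᵀ K v = vᵀ K ā`, hence `āᵀ K ā - vᵀ K v = (ā - v)ᵀ K (ā - v) ≥ 0`: `v` is the `K`-orthogonal
projection of `ā` onto the range of `Pᵀ`, so the data-fit term is unchanged and each RKHS penalty
can only decrease. -/

open Matrix

theorem Matrix.range_mulVecLin_mul_transpose {R m n : Type*} [Field R] [LinearOrder R]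
    [IsStrictOrderedRing R] [Fintype m] [Fintype n] (B : Matrix m n R) :
    LinearMap.range (B * Bᵀ).mulVecLin = LinearMap.range B.mulVecLin := by
  refine Submodule.eq_of_le_of_finrank_le ?_ (rank_self_mul_transpose B).ge
  rintro _ ⟨v, rfl⟩
  exact ⟨Bᵀ *ᵥ v, mulVec_mulVec _ _ _⟩

section

variable {m n : Type*} [Fintype m] [Fintype n]

open scoped MatrixOrder in
theorem Matrix.PosSemidef.exists_mulVec_mulVec_transpose_eq {K : Matrix n n ℝ}
    (hK : K.PosSemidef) (P : Matrix m n ℝ) (w : n → ℝ) :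
    ∃ α, P *ᵥ (K *ᵥ (Pᵀ *ᵥ α)) = P *ᵥ (K *ᵥ w) := by
  classical
  obtain ⟨B, rfl⟩ := CStarAlgebra.nonneg_iff_eq_star_mul_self.mp hK.nonneg
  obtain ⟨α, hα⟩ : (P * Bᵀ) *ᵥ (B *ᵥ w) ∈ LinearMap.range (P * Bᵀ * (P * Bᵀ)ᵀ).mulVecLin := by
    rw [range_mulVecLin_mul_transpose]
    exact ⟨_, rfl⟩
  have hB : star B = Bᵀ := conjTranspose_eq_transpose_of_trivial B
  refine ⟨α, ?_⟩
  calc P *ᵥ ((star B * B) *ᵥ (Pᵀ *ᵥ α)) = (P * Bᵀ * (P * Bᵀ)ᵀ) *ᵥ α := by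
        rw [hB, mulVec_mulVec, mulVec_mulVec, transpose_mul, transpose_transpose]
        simp only [Matrix.mul_assoc]
    _ = (P * Bᵀ) *ᵥ (B *ᵥ w) := hα
    _ = P *ᵥ ((star B * B) *ᵥ w) := by rw [hB, mulVec_mulVec, mulVec_mulVec, Matrix.mul_assoc]

theorem Matrix.PosSemidef.dotProduct_mulVec_le_of_mulVec_eq {K : Matrix n n ℝ}
    (hK : K.PosSemidef) {P : Matrix m n ℝ} {α : m → ℝ} {w : n → ℝ}
    (h : P *ᵥ (K *ᵥ (Pᵀ *ᵥ α)) = P *ᵥ (K *ᵥ w)) :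
    (Pᵀ *ᵥ α) ⬝ᵥ (K *ᵥ (Pᵀ *ᵥ α)) ≤ w ⬝ᵥ (K *ᵥ w) := by
  set v := Pᵀ *ᵥ α
  have hvv : v ⬝ᵥ (K *ᵥ v) = v ⬝ᵥ (K *ᵥ w) := by
    simpa only [dotProduct_mulVec α P, ← mulVec_transpose] using congrArg (α ⬝ᵥ ·) h
  have hsymm : w ⬝ᵥ (K *ᵥ v) = v ⬝ᵥ (K *ᵥ w) := by
    rw [dotProduct_mulVec, ← mulVec_transpose, ← conjTranspose_eq_transpose_of_trivial, hK.1,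
      dotProduct_comm]
  have hdiff := hK.dotProduct_mulVec_nonneg (w - v)
  simp only [star_trivial, mulVec_sub, dotProduct_sub, sub_dotProduct] at hdiff
  linarith

theorem Matrix.PosSemidef.exists_transpose_mulVec_representer {K : Matrix n n ℝ}
    (hK : K.PosSemidef) (P : Matrix m n ℝ) (w : n → ℝ) :
    ∃ α, P *ᵥ (K *ᵥ (Pᵀ *ᵥ α)) = P *ᵥ (K *ᵥ w) ∧
      (Pᵀ *ᵥ α) ⬝ᵥ (K *ᵥ (Pᵀ *ᵥ α)) ≤ w ⬝ᵥ (K *ᵥ w) :=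
  let ⟨α, hα⟩ := hK.exists_mulVec_mulVec_transpose_eq P w
  ⟨α, hα, hK.dotProduct_mulVec_le_of_mulVec_eq hα⟩

end

theorem stmt_8_general (N S M : ℕ) (K : Fin M → Matrix (Fin N) (Fin N) ℝ)
    (hK : ∀ m, (K m).PosSemidef)
    (P : Matrix (Fin S) (Fin N) ℝ)
    (y : Fin S → ℝ) (μ : ℝ) (hμ : 0 < μ)
    (J : (Fin M → Fin N → ℝ) → ℝ)
    (hJ : ∀ a : Fin M → Fin N → ℝ, J a =
      (1 / (S : ℝ)) * (∑ s, (y s - (∑ m, P *ᵥ (K m *ᵥ a m)) s) ^ 2)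
        + μ * ∑ m, Real.sqrt (a m ⬝ᵥ (K m *ᵥ a m))) :
    (∀ a : Fin M → Fin N → ℝ, ∃ α : Fin M → Fin S → ℝ,
        J (fun m => Pᵀ *ᵥ α m) ≤ J a) ∧
    ((∃ a0 : Fin M → Fin N → ℝ, ∀ a, J a0 ≤ J a) →
      ∃ α : Fin M → Fin S → ℝ, ∀ a, J (fun m => Pᵀ *ᵥ α m) ≤ J a) := by
  have reduce : ∀ a : Fin M → Fin N → ℝ, ∃ α : Fin M → Fin S → ℝ,
      J (fun m => Pᵀ *ᵥ α m) ≤ J a := by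
    intro a
    choose α hfit hnorm using fun m => (hK m).exists_transpose_mulVec_representer P (a m)
    refine ⟨α, ?_⟩
    rw [hJ, hJ, Finset.sum_congr rfl fun m _ => hfit m]
    gcongr with m
    exact hnorm m
  refine ⟨reduce, fun ⟨a0, h0⟩ => ?_⟩
  obtain ⟨α, hα⟩ := reduce a0
  exact ⟨α, fun a => hα.trans (h0 a)⟩

/-- Representer theorem for multi-kernel graph signal reconstruction by RKHS
superposition. -/
theorem stmt_8 (N S M : ℕ) (K : Fin M → Matrix (Fin N) (Fin N) ℝ)
    (hK : ∀ m, (K m).PosSemidef)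
    (idx : Fin S → Fin N) (hidx : StrictMono idx)
    (P : Matrix (Fin S) (Fin N) ℝ)
    (hP : ∀ s n, P s n = if n = idx s then 1 else 0)
    (y : Fin S → ℝ) (μ : ℝ) (hμ : 0 < μ)
    (J : (Fin M → Fin N → ℝ) → ℝ)
    (hJ : ∀ a : Fin M → Fin N → ℝ, J a =
      (1 / (S : ℝ)) * (∑ s, (y s - (∑ m, P *ᵥ (K m *ᵥ a m)) s) ^ 2)
        + μ * ∑ m, Real.sqrt (a m ⬝ᵥ (K m *ᵥ a m))) :
    (∀ a : Fin M → Fin N → ℝ, ∃ α : Fin M → Fin S → ℝ,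
        J (fun m => Pᵀ *ᵥ α m) ≤ J a) ∧
    ((∃ a0 : Fin M → Fin N → ℝ, ∀ a, J a0 ≤ J a) →
      ∃ α : Fin M → Fin S → ℝ, ∀ a, J (fun m => Pᵀ *ᵥ α m) ≤ J a) :=
  stmt_8_general N S M K hK P y μ hμ J hJ
end
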